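/- arXiv:2412.16517 — 2 statements merged into one kernel-verified Lean document; each statement's English description precedes it below -/
import Mathlib

section
/- For all integers q ≥ 2 and k ≥ 2, the formal power series V_{q,k}(X) = ∑_{n≥1} (ν_q(n) mod k) X^n, viewed as an element of ℂ[[X]], is not holonomic; that is, there do not exist an integer r ≥ 0 and polynomials a_0(X), a_1(X), …, a_r(X) ∈ ℂ[X] with a_r(X) ≠ 0 such that a_r(X)·(d^r/dX^r)V_{q,k}(X) + ⋯ + a_1(X)·(d/dX)V_{q,k}(X) + a_0(X)·V_{q,k}(X) = 0 in ℂ[[X]]. -/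
private lemma pv_eq {q n e : ℕ} (hq : 2 ≤ q) (hn : n ≠ 0) (h1 : q ^ e ∣ n)
    (h2 : ¬ q ^ (e + 1) ∣ n) : padicValNat q n = e := by
  rw [padicValNat_def' (by omega) hn]
  exact multiplicity_eq_of_dvd_of_not_dvd h1 h2

private lemma pv_succ_not_dvd {q u : ℕ} (hq : 2 ≤ q) (hu : u ≠ 0) :
    ¬ q ^ (padicValNat q u + 1) ∣ u := by
  rw [padicValNat_def' (by omega) hu]
  exact (Nat.finiteMultiplicity_iff.2 ⟨by omega, Nat.pos_of_ne_zero hu⟩).not_pow_dvd_of_multiplicity_lt (by omega)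

private lemma pv_pow {q e : ℕ} (hq : 2 ≤ q) : padicValNat q (q ^ e) = e := by
  refine pv_eq hq (by positivity) dvd_rfl ?_
  intro h
  have := Nat.le_of_dvd (by positivity) h
  have := Nat.pow_lt_pow_succ (by omega : 1 < q) (n := e)
  omega

private lemma pv_shift_add {q E u : ℕ} (hq : 2 ≤ q) (hu : u ≠ 0) (hlt : u < q ^ E) :
    padicValNat q (q ^ E + u) = padicValNat q u := by
  set e := padicValNat q u with he
  have hd : q ^ e ∣ u := pow_padicValNat_dvd
  have hle : q ^ e ≤ u := Nat.le_of_dvd (Nat.pos_of_ne_zero hu) hd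
  have heE : e < E := by
    by_contra hcon
    have := Nat.pow_le_pow_right (by omega : 1 ≤ q) (by omega : E ≤ e)
    omega
  refine pv_eq hq (by positivity) (dvd_add (pow_dvd_pow q heE.le) hd) ?_
  intro h
  have h2 : q ^ (e + 1) ∣ u := by
    have := Nat.dvd_sub h (pow_dvd_pow q (by omega : e + 1 ≤ E))
    simpa using this
  exact pv_succ_not_dvd hq hu h2

private lemma pv_shift_sub {q E u : ℕ} (hq : 2 ≤ q) (hu : u ≠ 0) (hlt : u < q ^ E) :
    padicValNat q (q ^ E - u) = padicValNat q u := by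
  set e := padicValNat q u with he
  have hd : q ^ e ∣ u := pow_padicValNat_dvd
  have hle : q ^ e ≤ u := Nat.le_of_dvd (Nat.pos_of_ne_zero hu) hd
  have heE : e < E := by
    by_contra hcon
    have := Nat.pow_le_pow_right (by omega : 1 ≤ q) (by omega : E ≤ e)
    omega
  refine pv_eq hq (by omega) (Nat.dvd_sub (pow_dvd_pow q heE.le) hd) ?_
  intro h
  have h2 : q ^ (e + 1) ∣ u := by
    have := Nat.dvd_sub (pow_dvd_pow q (by omega : e + 1 ≤ E)) h
    simpa [Nat.sub_sub_self hlt.le] using this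
  exact pv_succ_not_dvd hq hu h2

private lemma coeff_iter_deriv (f : PowerSeries ℂ) : ∀ (i m : ℕ),
    PowerSeries.coeff m ((⇑(PowerSeries.derivative ℂ))^[i] f) =
      PowerSeries.coeff (m + i) f * ∏ l ∈ Finset.range i, ((m : ℂ) + 1 + l)
  | 0, m => by simp
  | (i+1), m => by
    rw [Function.iterate_succ_apply, coeff_iter_deriv _ i m,
      PowerSeries.coeff_derivative, Finset.prod_range_succ]
    rw [show m + i + 1 = m + (i + 1) by omega]
    push_cast
    ring

open Finset Polynomial

/-- For all integers `q ≥ 2` and `k ≥ 2`, the formal power series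
`V_{q,k}(X) = ∑_{n ≥ 1} (ν_q(n) mod k) Xⁿ ∈ ℂ[[X]]` is not holonomic: there are no `r ≥ 0` and
polynomials `a_0, …, a_r ∈ ℂ[X]` with `a_r ≠ 0` such that
`∑_{i=0}^{r} a_i(X) · V_{q,k}^{(i)}(X) = 0`. -/
theorem Vqk_not_holonomic (q k : ℕ) (hq : 2 ≤ q) (hk : 2 ≤ k) :
    ¬ ∃ (r : ℕ) (a : ℕ → Polynomial ℂ), a r ≠ 0 ∧
      ∑ i ∈ Finset.range (r + 1),
        ((a i : PowerSeries ℂ) *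
          (⇑(PowerSeries.derivative ℂ))^[i]
            (PowerSeries.mk fun n => ((padicValNat q n % k : ℕ) : ℂ))) = 0 := by
  rintro ⟨r, a, har, H⟩
  classical
  set c : ℕ → ℂ := fun n => ((padicValNat q n % k : ℕ) : ℂ) with hc
  set d : ℕ := (Finset.range (r+1)).sup fun i => (a i).natDegree with hdd
  have hdeg : ∀ i, i ≤ r → (a i).natDegree ≤ d :=
    fun i hi => Finset.le_sup (f := fun i => (a i).natDegree) (Finset.mem_range.2 (by omega))
  set p : ℕ → Polynomial ℂ := fun t => ∑ i ∈ Finset.range (r+1),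
      if t ≤ i + d then Polynomial.C ((a i).coeff (i + d - t)) *
        ∏ l ∈ Finset.range i, (Polynomial.X + Polynomial.C (((l : ℂ) + 1) - ((i + d - t : ℕ) : ℂ)))
      else 0
    with hp
  have claimA : ∀ n : ℕ, d ≤ n →
      ∑ t ∈ Finset.range (d + r + 1), (p t).eval (n : ℂ) * c (n - d + t) = 0 := by
    intro n hn
    have h0 := congrArg (PowerSeries.coeff n) H
    rw [map_sum, map_zero] at h0
    have hterm : ∀ i ∈ Finset.range (r+1),
        (PowerSeries.coeff n) ((a i : PowerSeries ℂ) *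
          (⇑(PowerSeries.derivative ℂ))^[i] (PowerSeries.mk c)) =
        ∑ j ∈ Finset.range (d+1), (a i).coeff j *
          (c (n - j + i) * ∏ l ∈ Finset.range i, (((n - j : ℕ) : ℂ) + 1 + l)) := by
      intro i hi
      rw [PowerSeries.coeff_mul, Finset.Nat.sum_antidiagonal_eq_sum_range_succ_mk]
      rw [← Finset.sum_subset (Finset.range_subset_range.2 (by omega : d + 1 ≤ n + 1)) ?_]
      · apply Finset.sum_congr rfl
        intro j hj
        rw [Polynomial.coeff_coe, coeff_iter_deriv, PowerSeries.coeff_mk]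
      · intro j hjn hjd
        have hlt : (a i).natDegree < j := by
          have := hdeg i (by simpa using Nat.lt_succ_iff.mp (Finset.mem_range.1 hi))
          simp only [Finset.mem_range] at hjn hjd
          omega
        rw [Polynomial.coeff_coe, Polynomial.coeff_eq_zero_of_natDegree_lt hlt, zero_mul]
    rw [Finset.sum_congr rfl hterm] at h0
    rw [← h0]
    -- expand eval of p t
    have hev : ∀ t, (p t).eval (n : ℂ) = ∑ i ∈ Finset.range (r+1),
        if t ≤ i + d then (a i).coeff (i + d - t) *
          ∏ l ∈ Finset.range i, ((n : ℂ) + (((l : ℂ) + 1) - ((i + d - t : ℕ) : ℂ)))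
        else 0 := by
      intro t
      rw [hp]
      rw [Polynomial.eval_finset_sum]
      apply Finset.sum_congr rfl
      intro i hi
      rw [apply_ite (Polynomial.eval ((n : ℕ) : ℂ))]
      simp [Polynomial.eval_prod]
    calc ∑ t ∈ Finset.range (d + r + 1), (p t).eval (n : ℂ) * c (n - d + t)
        = ∑ i ∈ Finset.range (r+1), ∑ t ∈ Finset.range (d + r + 1),
            (if t ≤ i + d then (a i).coeff (i + d - t) *
              ∏ l ∈ Finset.range i, ((n : ℂ) + (((l : ℂ) + 1) - ((i + d - t : ℕ) : ℂ)))
            else 0) * c (n - d + t) := by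
          rw [Finset.sum_comm]
          exact Finset.sum_congr rfl fun t _ => by rw [hev, Finset.sum_mul]
      _ = ∑ i ∈ Finset.range (r+1), ∑ j ∈ Finset.range (d+1), (a i).coeff j *
            (c (n - j + i) * ∏ l ∈ Finset.range i, (((n - j : ℕ) : ℂ) + 1 + l)) := by
          apply Finset.sum_congr rfl
          intro i hi
          have hir : i ≤ r := by simpa using Nat.lt_succ_iff.mp (Finset.mem_range.1 hi)
          rw [← Finset.sum_subset (show Finset.Icc i (i+d) ⊆ Finset.range (d+r+1) by
              intro t ht; simp only [Finset.mem_Icc] at ht; simp only [Finset.mem_range]; omega) ?_]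
          · refine Finset.sum_nbij' (fun t => i + d - t) (fun j => i + d - j) ?_ ?_ ?_ ?_ ?_
            · intro t ht; simp only [Finset.mem_Icc] at ht; simp only [Finset.mem_range]; omega
            · intro j hj; simp only [Finset.mem_range] at hj; simp only [Finset.mem_Icc]; omega
            · intro t ht; simp only [Finset.mem_Icc] at ht
              show i + d - (i + d - t) = t; omega
            · intro j hj; simp only [Finset.mem_range] at hj
              show i + d - (i + d - j) = j; omega
            · intro t ht
              simp only [Finset.mem_Icc] at ht
              rw [if_pos (by omega : t ≤ i + d)]
              have hjd : i + d - t ≤ d := by omega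
              have hjn : i + d - t ≤ n := by omega
              have hcidx : n - d + t = n - (i + d - t) + i := by omega
              rw [hcidx]
              rw [mul_assoc]
              congr 1
              rw [mul_comm]
              congr 1
              apply Finset.prod_congr rfl
              intro l hl
              rw [Nat.cast_sub hjn]
              ring
          · intro t htr htI
            simp only [Finset.mem_range] at htr
            simp only [Finset.mem_Icc, not_and_or, not_le] at htI
            rcases htI with h1 | h2
            · rw [if_pos (by omega : t ≤ i + d)]
              rw [Polynomial.coeff_eq_zero_of_natDegree_lt
                (show (a i).natDegree < i + d - t by have := hdeg i hir; omega)]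
              simp
            · rw [if_neg (by omega), zero_mul]

  -- choose t0 with p t0 ≠ 0 (Claim B)
  set j0 : ℕ := (a r).natDegree with hj0
  have hj0d : j0 ≤ d := hdeg r le_rfl
  set t0 : ℕ := r + d - j0 with ht0
  have hca : (a r).coeff j0 ≠ 0 := by
    rw [hj0, ← Polynomial.leadingCoeff]
    exact Polynomial.leadingCoeff_ne_zero.2 har
  have claimB : (p t0).coeff r ≠ 0 := by
    have hcoeff : (p t0).coeff r = (a r).coeff j0 := by
      rw [hp]
      rw [Polynomial.finset_sum_coeff]
      rw [Finset.sum_eq_single_of_mem r (Finset.self_mem_range_succ r) ?_]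
      · rw [if_pos (by omega : t0 ≤ r + d)]
        rw [show r + d - t0 = j0 by omega]
        rw [Polynomial.coeff_C_mul]
        have hmonic : (∏ l ∈ Finset.range r,
            (Polynomial.X + Polynomial.C (((l : ℂ) + 1) - ((j0 : ℕ) : ℂ)))).Monic :=
          Polynomial.monic_prod_of_monic _ _ fun l _ => Polynomial.monic_X_add_C _
        have hdegp : (∏ l ∈ Finset.range r,
            (Polynomial.X + Polynomial.C (((l : ℂ) + 1) - ((j0 : ℕ) : ℂ)))).natDegree = r := by
          rw [Polynomial.natDegree_prod _ _ fun l _ => (Polynomial.monic_X_add_C _).ne_zero,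
            Finset.sum_congr rfl fun l _ => Polynomial.natDegree_X_add_C _]
          simp
        have h1 := hmonic.coeff_natDegree
        rw [hdegp] at h1
        rw [h1, mul_one]
      · intro i hi hir
        have hilt : i < r := by
          have := Finset.mem_range.1 hi; omega
        by_cases hg : t0 ≤ i + d
        · rw [if_pos hg]
          apply Polynomial.coeff_eq_zero_of_natDegree_lt
          calc (Polynomial.C ((a i).coeff (i + d - t0)) * ∏ l ∈ Finset.range i,
                (Polynomial.X + Polynomial.C (((l : ℂ) + 1) - ((i + d - t0 : ℕ) : ℂ)))).natDegree
              ≤ (∏ l ∈ Finset.range i,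
                (Polynomial.X + Polynomial.C (((l : ℂ) + 1) - ((i + d - t0 : ℕ) : ℂ)))).natDegree :=
                Polynomial.natDegree_C_mul_le _ _
            _ ≤ ∑ l ∈ Finset.range i, (Polynomial.X +
                Polynomial.C (((l : ℂ) + 1) - ((i + d - t0 : ℕ) : ℂ))).natDegree :=
                Polynomial.natDegree_prod_le _ _
            _ ≤ i := by
                apply le_trans (Finset.sum_le_card_nsmul _ _ 1 fun l _ =>
                  le_of_eq (Polynomial.natDegree_X_add_C _))
                simp
            _ < r := hilt
        · rw [if_neg hg, Polynomial.coeff_zero]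
    rw [hcoeff]
    exact hca
  have ht0dr : t0 ≤ d + r := by omega
  have ht0mem : t0 ∈ Finset.range (d + r + 1) := Finset.mem_range.2 (by omega)
  -- Claim C setup
  set w : ℕ → ℂ := fun t => ((padicValNat q (Nat.dist t t0) % k : ℕ) : ℂ) with hw
  have hw0 : w t0 = 0 := by simp [hw, Nat.dist_self]
  set M : ℕ := d + r + 1 with hM
  have hbig : ∀ E : ℕ, M ≤ E → d + r < q ^ E := by
    intro E hE
    have h1 : E < 2 ^ E := Nat.lt_two_pow_self
    have h2 : 2 ^ E ≤ q ^ E := Nat.pow_le_pow_left (by omega) E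
    omega
  have hval : ∀ E : ℕ, d + r < q ^ E → ∀ t, t ≤ d + r →
      c (q ^ E - t0 + t) = if t = t0 then ((E % k : ℕ) : ℂ) else w t := by
    intro E hE t htdr
    have ht0E : t0 < q ^ E := by omega
    by_cases h : t = t0
    · rw [if_pos h, show q ^ E - t0 + t = q ^ E by omega]
      simp only [hc]
      rw [pv_pow hq]
    · rw [if_neg h]
      rcases Nat.lt_or_ge t0 t with hlt | hge
      · rw [show q ^ E - t0 + t = q ^ E + (t - t0) by omega]
        simp only [hc, hw]
        rw [pv_shift_add hq (by omega) (by omega), Nat.dist_eq_sub_of_le_right hlt.le]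
      · have hlt2 : t < t0 := by omega
        rw [show q ^ E - t0 + t = q ^ E - (t0 - t) by omega]
        simp only [hc, hw]
        rw [pv_shift_sub hq (by omega) (by omega), Nat.dist_eq_sub_of_le hlt2.le]
  have hroot : ∀ (v : ℕ → ℂ) (E : ℕ), d + r < q ^ E →
      (∀ t, t ≤ d + r → c (q ^ E - t0 + t) = v t) →
      Polynomial.eval ((q ^ E - t0 + d : ℕ) : ℂ)
        (∑ t ∈ Finset.range (d + r + 1), v t • p t) = 0 := by
    intro v E hE hv
    rw [Polynomial.eval_finset_sum]
    have hn : d ≤ q ^ E - t0 + d := by omega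
    calc ∑ t ∈ Finset.range (d + r + 1),
          Polynomial.eval ((q ^ E - t0 + d : ℕ) : ℂ) (v t • p t)
        = ∑ t ∈ Finset.range (d + r + 1),
          (p t).eval ((q ^ E - t0 + d : ℕ) : ℂ) * c (q ^ E - t0 + d - d + t) := by
          apply Finset.sum_congr rfl
          intro t htm
          have htdr : t ≤ d + r := by have := Finset.mem_range.1 htm; omega
          rw [Polynomial.eval_smul, smul_eq_mul, mul_comm,
            show q ^ E - t0 + d - d + t = q ^ E - t0 + t by omega, hv t htdr]
      _ = 0 := claimA _ hn
  have hinj : ∀ g : ℕ → ℕ, (∀ m, M ≤ g m) → Function.Injective g →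
      Function.Injective (fun m : ℕ => ((q ^ (g m) - t0 + d : ℕ) : ℂ)) := by
    intro g hgM hginj m1 m2 h
    simp only [Nat.cast_inj] at h
    have h1 := hbig (g m1) (hgM m1)
    have h2 := hbig (g m2) (hgM m2)
    have hpow : q ^ g m1 = q ^ g m2 := by omega
    exact hginj (Nat.pow_right_injective hq hpow)
  have hPA : ∑ t ∈ Finset.range (d + r + 1),
      (if t = t0 then (1 : ℂ) else w t) • p t = 0 := by
    apply Polynomial.eq_zero_of_infinite_isRoot
    apply Set.infinite_of_injective_forall_mem
      (f := fun m : ℕ => ((q ^ ((m + M) * k + 1) - t0 + d : ℕ) : ℂ))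
    · apply hinj
      · intro m
        calc M ≤ m + M := by omega
          _ ≤ (m + M) * k := Nat.le_mul_of_pos_right _ (by omega)
          _ ≤ (m + M) * k + 1 := by omega
      · intro m1 m2 h
        simp only at h
        have := Nat.eq_of_mul_eq_mul_right (show 0 < k by omega)
          (show (m1 + M) * k = (m2 + M) * k by omega)
        omega
    · intro m
      simp only [Set.mem_setOf_eq, Polynomial.IsRoot]
      apply hroot
      · apply hbig
        calc M ≤ m + M := by omega
          _ ≤ (m + M) * k := Nat.le_mul_of_pos_right _ (by omega)
          _ ≤ (m + M) * k + 1 := by omega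
      · intro t htdr
        rw [hval _ (hbig _ (by
          calc M ≤ m + M := by omega
            _ ≤ (m + M) * k := Nat.le_mul_of_pos_right _ (by omega)
            _ ≤ (m + M) * k + 1 := by omega)) t htdr]
        by_cases h : t = t0
        · rw [if_pos h, if_pos h]
          rw [Nat.mul_add_mod', Nat.mod_eq_of_lt (by omega : 1 < k)]
          norm_num
        · rw [if_neg h, if_neg h]
  have hPB : ∑ t ∈ Finset.range (d + r + 1), w t • p t = 0 := by
    have hge : ∀ m : ℕ, M ≤ (m + M + 1) * k := by
      intro m
      calc M ≤ m + M + 1 := by omega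
        _ ≤ (m + M + 1) * k := Nat.le_mul_of_pos_right _ (by omega)
    apply Polynomial.eq_zero_of_infinite_isRoot
    apply Set.infinite_of_injective_forall_mem
      (f := fun m : ℕ => ((q ^ ((m + M + 1) * k) - t0 + d : ℕ) : ℂ))
    · apply hinj _ hge
      intro m1 m2 h
      simp only at h
      have := Nat.eq_of_mul_eq_mul_right (show 0 < k by omega)
        (show (m1 + M + 1) * k = (m2 + M + 1) * k by omega)
      omega
    · intro m
      simp only [Set.mem_setOf_eq, Polynomial.IsRoot]
      apply hroot
      · exact hbig _ (hge m)
      · intro t htdr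
        rw [hval _ (hbig _ (hge m)) t htdr]
        by_cases h : t = t0
        · rw [if_pos h, Nat.mul_mod_left, h, hw0]
          norm_num
        · rw [if_neg h]
  have hptz : p t0 = 0 := by
    have hkey : ∑ t ∈ Finset.range (d + r + 1),
        ((if t = t0 then (1 : ℂ) else w t) • p t - w t • p t) = p t0 := by
      have hstep : ∀ t ∈ Finset.range (d + r + 1),
          (if t = t0 then (1 : ℂ) else w t) • p t - w t • p t
            = if t = t0 then p t else 0 := by
        intro t _
        by_cases h : t = t0
        · subst h; simp [hw0]
        · simp [h]
      rw [Finset.sum_congr rfl hstep, Finset.sum_ite_eq' (Finset.range (d + r + 1)) t0 p,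
        if_pos ht0mem]
    rw [Finset.sum_sub_distrib, hPA, hPB, sub_zero] at hkey
    exact hkey.symm
  rw [hptz, Polynomial.coeff_zero] at claimB
  exact claimB rfl
end

section
/- Let q ≥ 2 be an integer, let h and ℓ be positive integers with h relatively prime to q, and set ω = exp(2πih/q^ℓ). Then for every complex number x with |x| < 1 (avoiding the finitely many points where a denominator below vanishes), V_q(ωx) − V_q(x) = ∑_{j=1}^{ℓ−1} [ ω^{q^j} x^{q^j} / (1 − ω^{q^j} x^{q^j}) − x^{q^j} / (1 − x^{q^j}) ], where the empty sum for ℓ = 1 is 0. In particular, V_q(ωx) − V_q(x) is a rational function of x. -/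
open Complex

private lemma pow_dvd_iff_le_val {q : ℕ} (hq : 2 ≤ q) {n : ℕ} (hn : n ≠ 0) (k : ℕ) :
    q ^ k ∣ n ↔ k ≤ padicValNat q n := by
  have hfin : FiniteMultiplicity q n :=
    Nat.finiteMultiplicity_iff.2 ⟨by omega, Nat.pos_of_ne_zero hn⟩
  rw [padicValNat_def' (by omega : q ≠ 1) hn]
  exact hfin.pow_dvd_iff_le_multiplicity

private noncomputable def Fq (q : ℕ) (y : ℂ) : ℕ × ℕ → ℂ :=
  fun p => if q ^ (p.1 + 1) ∣ p.2 ∧ p.2 ≠ 0 then y ^ p.2 else 0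

private lemma normFq (q : ℕ) (y : ℂ) (p : ℕ × ℕ) :
    ‖Fq q y p‖ = if q ^ (p.1 + 1) ∣ p.2 ∧ p.2 ≠ 0 then ‖y‖ ^ p.2 else 0 := by
  unfold Fq; split <;> simp

private lemma exp_le_pow {q : ℕ} (hq : 2 ≤ q) (j : ℕ) : j + 1 ≤ q ^ (j + 1) :=
  le_of_lt (Nat.lt_pow_self (n := j + 1) (by omega))

private lemma summable_Fq {q : ℕ} (hq : 2 ≤ q) {y : ℂ} (hy : ‖y‖ < 1) :
    Summable (Fq q y) := by
  set r := ‖y‖ with hr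
  have hr0 : 0 ≤ r := norm_nonneg y
  have hgeo : Summable fun n : ℕ => r ^ n := summable_geometric_of_lt_one hr0 hy
  apply Summable.of_norm
  rw [show (fun p => ‖Fq q y p‖) =
      fun p : ℕ × ℕ => if q ^ (p.1 + 1) ∣ p.2 ∧ p.2 ≠ 0 then r ^ p.2 else 0 from
    funext fun p => normFq q y p]
  rw [summable_prod_of_nonneg (fun p => by split <;> positivity)]
  constructor
  · intro j
    apply hgeo.of_nonneg_of_le (fun n => by split <;> positivity)
    intro n; split
    · exact le_refl _
    · positivity
  · -- bound row sums by r^(j+1) * (1-r)⁻¹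
    have hH : ∀ j : ℕ, Summable (fun n : ℕ => if j + 1 ≤ n then r ^ n else 0) := by
      intro j
      apply hgeo.of_nonneg_of_le (fun n => by split <;> positivity)
      intro n; split
      · exact le_refl _
      · positivity
    have hHval : ∀ j : ℕ, (∑' n : ℕ, if j + 1 ≤ n then r ^ n else 0)
        = r ^ (j + 1) * (1 - r)⁻¹ := by
      intro j
      have hinj : Function.Injective (fun m : ℕ => m + (j + 1)) := fun a b hab => by
        simpa using hab
      rw [← Function.Injective.tsum_eq hinj (f := fun n : ℕ => if j + 1 ≤ n then r ^ n else 0)]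
      · have : (fun m : ℕ => if j + 1 ≤ m + (j + 1) then r ^ (m + (j + 1)) else 0)
            = fun m : ℕ => r ^ m * r ^ (j + 1) := by
          funext m; rw [if_pos (by omega), pow_add]
        rw [this, tsum_mul_right, tsum_geometric_of_lt_one hr0 hy, mul_comm]
      · intro n hn
        rw [Function.mem_support] at hn
        have hle : j + 1 ≤ n := by by_contra hc; simp [hc] at hn
        exact ⟨n - (j + 1), by show n - (j + 1) + (j + 1) = n; omega⟩
    have hbnd : Summable (fun j : ℕ => r ^ (j + 1) * (1 - r)⁻¹) := by
      simp only [pow_succ, mul_assoc]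
      exact hgeo.mul_right _
    refine hbnd.of_nonneg_of_le
      (fun j => tsum_nonneg (fun n => by split <;> positivity)) (fun j => ?_)
    · rw [← hHval j]
      apply Summable.tsum_le_tsum _ _ (hH j)
      · intro n
        split
        · rename_i hc
          rw [if_pos]
          exact le_trans (exp_le_pow hq j) (Nat.le_of_dvd (Nat.pos_of_ne_zero hc.2) hc.1)
        · split <;> positivity
      · apply hgeo.of_nonneg_of_le (fun n => by split <;> positivity)
        intro n; split
        · exact le_refl _
        · positivity

private lemma norm_pow_lt_one {y : ℂ} (hy : ‖y‖ < 1) {Q : ℕ} (hQ : Q ≠ 0) :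
    ‖y ^ Q‖ < 1 := by
  rw [norm_pow]
  exact pow_lt_one₀ (norm_nonneg y) hy hQ

private lemma Vq_eq {q : ℕ} (hq : 2 ≤ q) {y : ℂ} (hy : ‖y‖ < 1) :
    ∑' n : ℕ, (padicValNat q n : ℂ) * y ^ n
      = ∑' j : ℕ, y ^ q ^ (j + 1) / (1 - y ^ q ^ (j + 1)) := by
  have hqpow : ∀ k : ℕ, q ^ k ≠ 0 := fun k => pow_ne_zero k (by omega)
  have hs : Summable (Fq q y) := summable_Fq hq hy
  have step1 : ∀ n : ℕ, (padicValNat q n : ℂ) * y ^ n = ∑' j : ℕ, Fq q y (j, n) := by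
    intro n
    rcases eq_or_ne n 0 with rfl | hn
    · simp [Fq]
    · rw [tsum_eq_sum (s := Finset.range (padicValNat q n))
        (f := fun j => Fq q y (j, n))]
      · have : ∀ j ∈ Finset.range (padicValNat q n), Fq q y (j, n) = y ^ n := by
          intro j hj
          simp only [Finset.mem_range] at hj
          unfold Fq
          rw [if_pos ⟨(pow_dvd_iff_le_val hq hn (j + 1)).2 (by omega), hn⟩]
        rw [Finset.sum_congr rfl this, Finset.sum_const, Finset.card_range, nsmul_eq_mul]
      · intro j hj
        simp only [Finset.mem_range, not_lt] at hj
        unfold Fq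
        rw [if_neg]
        rintro ⟨hdvd, -⟩
        have := (pow_dvd_iff_le_val hq hn (j + 1)).1 hdvd
        omega
  have step2 : ∀ j : ℕ, (∑' n : ℕ, Fq q y (j, n))
      = y ^ q ^ (j + 1) / (1 - y ^ q ^ (j + 1)) := by
    intro j
    set z := y ^ q ^ (j + 1) with hz
    have hznorm : ‖z‖ < 1 := norm_pow_lt_one hy (hqpow (j + 1))
    have hinj : Function.Injective (fun m : ℕ => q ^ (j + 1) * (m + 1)) := by
      intro a b hab
      dsimp only at hab
      have hpos : 0 < q ^ (j + 1) := Nat.pos_of_ne_zero (hqpow (j + 1))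
      have := Nat.eq_of_mul_eq_mul_left hpos hab
      omega
    rw [← Function.Injective.tsum_eq hinj (f := fun n => Fq q y (j, n))]
    · have : (fun m : ℕ => Fq q y (j, q ^ (j + 1) * (m + 1))) = fun m : ℕ => z * z ^ m := by
        funext m
        unfold Fq
        rw [if_pos ⟨⟨m + 1, rfl⟩, by positivity⟩]
        rw [hz, pow_mul, pow_succ, mul_comm]
      rw [this, tsum_mul_left, tsum_geometric_of_norm_lt_one hznorm, div_eq_mul_inv]
    · intro n hn
      simp only [Function.mem_support, ne_eq] at hn
      unfold Fq at hn
      by_cases hc : q ^ (j + 1) ∣ n ∧ n ≠ 0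
      · obtain ⟨⟨m, rfl⟩, hn0⟩ := hc
        have hm : m ≠ 0 := by rintro rfl; simp at hn0
        refine ⟨m - 1, ?_⟩
        show q ^ (j + 1) * (m - 1 + 1) = q ^ (j + 1) * m
        rw [Nat.sub_add_cancel (Nat.one_le_iff_ne_zero.2 hm)]
      · rw [if_neg hc] at hn; exact absurd rfl hn
  calc ∑' n : ℕ, (padicValNat q n : ℂ) * y ^ n
      = ∑' n : ℕ, ∑' j : ℕ, Fq q y (j, n) := tsum_congr step1
    _ = ∑' j : ℕ, ∑' n : ℕ, Fq q y (j, n) :=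
        Summable.tsum_comm' hs (fun j => hs.prod_factor j) (fun n => hs.prod_symm.prod_factor n)
    _ = ∑' j : ℕ, y ^ q ^ (j + 1) / (1 - y ^ q ^ (j + 1)) := tsum_congr step2

private lemma summable_g {q : ℕ} (hq : 2 ≤ q) {y : ℂ} (hy : ‖y‖ < 1) :
    Summable fun j : ℕ => y ^ q ^ (j + 1) / (1 - y ^ q ^ (j + 1)) := by
  set r := ‖y‖ with hr
  have hr0 : 0 ≤ r := norm_nonneg y
  have hqpow : ∀ k : ℕ, q ^ k ≠ 0 := fun k => pow_ne_zero k (by omega)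
  apply Summable.of_norm_bounded (g := fun j => r ^ (j + 1) / (1 - r))
  · simp only [div_eq_mul_inv, pow_succ, mul_assoc]
    exact (summable_geometric_of_lt_one hr0 hy).mul_right _
  · intro j
    have hzn : ‖y ^ q ^ (j + 1)‖ = r ^ q ^ (j + 1) := by rw [norm_pow]
    have h1 : ‖y ^ q ^ (j + 1)‖ ≤ r ^ (j + 1) := by
      rw [hzn]
      exact pow_le_pow_of_le_one hr0 (le_of_lt hy) (exp_le_pow hq j)
    have h2 : (1 : ℝ) - r ≤ ‖1 - y ^ q ^ (j + 1)‖ := by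
      have := norm_sub_norm_le (1 : ℂ) (y ^ q ^ (j + 1))
      have hle : ‖y ^ q ^ (j + 1)‖ ≤ r := by
        rw [hzn]
        calc r ^ q ^ (j + 1) ≤ r ^ 1 :=
          pow_le_pow_of_le_one hr0 (le_of_lt hy) (Nat.one_le_iff_ne_zero.2 (hqpow (j + 1)))
        _ = r := pow_one r
      simp only [norm_one] at this
      linarith
    rw [norm_div]
    show ‖y ^ q ^ (j + 1)‖ / ‖1 - y ^ q ^ (j + 1)‖ ≤ r ^ (j + 1) / (1 - r)
    exact div_le_div₀ (by positivity) h1 (by linarith) h2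

/-- Let `q ≥ 2`, let `h, ℓ ≥ 1` with `h` coprime to `q`, and set
`ω = exp(2πih/q^ℓ)`. Then for every complex `x` with `|x| < 1`,
`V_q(ωx) − V_q(x) = ∑_{j=1}^{ℓ−1} (ω^{q^j} x^{q^j}/(1 − ω^{q^j} x^{q^j}) − x^{q^j}/(1 − x^{q^j}))`
(the empty sum for `ℓ = 1` being `0`); in particular the difference is a rational function
of `x`. Here `V_q(z) = ∑_{n ≥ 1} ν_q(n) zⁿ`, and for `|x| < 1` none of the denominators
vanish. -/
theorem Vq_omega_difference (q h ℓ : ℕ) (hq : 2 ≤ q) (hh : 1 ≤ h) (hℓ : 1 ≤ ℓ)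
    (hcop : Nat.Coprime h q) (x : ℂ) (hx : ‖x‖ < 1) :
    (∑' n : ℕ, (padicValNat q n : ℂ) *
        (Complex.exp (2 * Real.pi * Complex.I * h / (q : ℂ) ^ ℓ) * x) ^ n)
      - (∑' n : ℕ, (padicValNat q n : ℂ) * x ^ n)
      = ∑ j ∈ Finset.Ico 1 ℓ,
          ((Complex.exp (2 * Real.pi * Complex.I * h / (q : ℂ) ^ ℓ)) ^ q ^ j * x ^ q ^ j /
              (1 - (Complex.exp (2 * Real.pi * Complex.I * h / (q : ℂ) ^ ℓ)) ^ q ^ j * x ^ q ^ j)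
            - x ^ q ^ j / (1 - x ^ q ^ j)) := by
  have hq0 : (q : ℂ) ^ ℓ ≠ 0 := pow_ne_zero ℓ (Nat.cast_ne_zero.2 (by omega))
  set ω : ℂ := Complex.exp (2 * Real.pi * Complex.I * h / (q : ℂ) ^ ℓ) with hω
  have hωnorm : ‖ω‖ = 1 := by
    have harg : 2 * (Real.pi : ℂ) * Complex.I * h / (q : ℂ) ^ ℓ
        = ((2 * Real.pi * h / (q : ℝ) ^ ℓ : ℝ) : ℂ) * Complex.I := by
      push_cast
      field_simp
    rw [hω, harg, Complex.norm_exp_ofReal_mul_I]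
  have hωx : ‖ω * x‖ < 1 := by rw [norm_mul, hωnorm, one_mul]; exact hx
  have hωpow : ∀ k : ℕ, ℓ ≤ k → ω ^ q ^ k = 1 := by
    intro k hk
    rw [hω, ← Complex.exp_nat_mul]
    have : ((q ^ k : ℕ) : ℂ) * (2 * Real.pi * Complex.I * h / (q : ℂ) ^ ℓ)
        = ((h * q ^ (k - ℓ) : ℕ) : ℂ) * (2 * Real.pi * Complex.I) := by
      push_cast
      have hqk : (q : ℂ) ^ k = (q : ℂ) ^ (k - ℓ) * (q : ℂ) ^ ℓ := by
        rw [← pow_add, Nat.sub_add_cancel hk]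
      rw [hqk]
      field_simp
    rw [this, Complex.exp_nat_mul_two_pi_mul_I]
  rw [Vq_eq hq hωx, Vq_eq hq hx,
    ← Summable.tsum_sub (summable_g hq hωx) (summable_g hq hx)]
  rw [tsum_eq_sum (s := Finset.range (ℓ - 1))]
  · rw [Finset.sum_Ico_eq_sum_range]
    apply Finset.sum_congr rfl
    intro j _
    rw [add_comm 1 j, mul_pow]
  · intro j hj
    simp only [Finset.mem_range, not_lt] at hj
    rw [mul_pow, hωpow (j + 1) (by omega), one_mul, sub_self]
end
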